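/- Let p ≥ 2 be an integer. Assume there exist nonzero real numbers a_1 = 1, a_2, …, a_p such that ⟨E_{M1⋯Mk} | F^{N1⋯Nk}⟩ = a_k (ℙ_k)_{M1⋯Mk}^{N1⋯Nk} for k = 2, …, p. For 1 ≤ k ≤ p define 𝚇_{M|N1⋯Nk}^{P1⋯Pk} = (1/a_k) ⟦E_M, ⟦E_{N1⋯Nk}, F^{P1⋯Pk}⟧⟧ ∈ U_{−1} (so 𝚇_{M|N}^{P} = ⟦E_M, ⟦E_N, F^P⟧⟧). Then for all indices M, N1, …, Np, P1, …, Pp: 𝚇_{M|N1⋯Np}^{P1⋯Pp} = Σ_{Q1,…,Qp} (ℙ_p)_{Q1⋯Qp}^{P1⋯Pp} Σ_{i=1}^{p} δ_{N1}^{Q1} ⋯ δ_{N(i−1)}^{Q(i−1)} 𝚇_{M|Ni}^{Qi} δ_{N(i+1)}^{Q(i+1)} ⋯ δ_{Np}^{Qp}, an identity in U_{−1}. -/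

import Mathlib

/-- Nested bracket `⟦f M1, ⟦f M2, …, ⟦f M(k-1), f Mk⟧⋯⟧⟧` of a family `f : ι → V`
along a tuple of `k` indices (junk value `0` for `k = 0`). -/
def nest {V : Type} [AddCommGroup V] [Module ℝ V] {ι : Type}
    (bb : V →ₗ[ℝ] V →ₗ[ℝ] V) (f : ι → V) : (k : ℕ) → (Fin k → ι) → V
  | 0, _ => 0
  | 1, M => f (M 0)
  | (k + 2), M => bb (f (M 0)) (nest bb f (k + 1) (fun i => M i.succ))

/-!
Induction on `p`. Write `E_{N₁⋯Nₚ} = ⟦E_{N₁}, E_{N₂⋯Nₚ}⟧` and split `⟦E_{N₁⋯Nₚ}, F^P⟧` with the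
Jacobi identity. Of the two resulting brackets, `⟦E_{N₂⋯Nₚ}, F^P⟧` lies in `U₁` and
`⟦E_{N₁}, F^P⟧` in `U_{p-1}`; both are expanded in the spanning families `F^Q`, the coefficients
being read off by invariance of the form: `⟨E_Q|⟦x, F^P⟧⟩ = ⟨⟦E_Q, x⟧|F^P⟩ = ± aₚ ℙₚ`.
The first bracket gives the `i = 1` term. The second, after the induction hypothesis, gives the
terms `i ≥ 2` once the inner `ℙ_{p-1}` is absorbed into `ℙₚ` by `ℙₚ = ℙ_{p-1} ℙₚ ℙ_{p-1}` and
idempotency. The signs coming from the Jacobi identity and from antisymmetry cancel.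
-/

open Finset Function

namespace Fin

variable {α : Type} {n : ℕ}

lemma update_zero_eq_cons (N : Fin (n + 1) → α) (t : α) : update N 0 t = cons t (tail N) := by
  rw [← update_cons_zero (x := N 0), cons_self_tail]

lemma update_succ_eq_cons (N : Fin (n + 1) → α) (i : Fin n) (t : α) :
    update N i.succ t = cons (N 0) (update (tail N) i t) := by
  rw [cons_update, cons_self_tail]

end Fin

section Nest

variable {V : Type} [AddCommGroup V] [Module ℝ V] {ι : Type} (bb : V →ₗ[ℝ] V →ₗ[ℝ] V) (f : ι → V)

lemma nest_one (M : Fin 1 → ι) : nest bb f 1 M = f (M 0) := rfl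

lemma nest_succ_succ (m : ℕ) (M : Fin (m + 2) → ι) :
    nest bb f (m + 2) M = bb (f (M 0)) (nest bb f (m + 1) (Fin.tail M)) := rfl

lemma nest_cons (m : ℕ) (t : ι) (T : Fin (m + 1) → ι) :
    nest bb f (m + 2) (Fin.cons t T) = bb (f t) (nest bb f (m + 1) T) := by
  rw [nest_succ_succ, Fin.cons_zero, Fin.tail_cons]

lemma range_nest_one : Set.range (nest bb f 1) = Set.range f := by
  ext u
  constructor
  · rintro ⟨T, rfl⟩
    exact ⟨T 0, rfl⟩
  · rintro ⟨t, rfl⟩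
    exact ⟨fun _ => t, rfl⟩

lemma nest_mem {U : ℤ → Submodule ℝ V}
    (hgrade : ∀ (p q : ℤ) (x y : V), x ∈ U p → y ∈ U q → bb x y ∈ U (p + q))
    {d : ℤ} (hf : ∀ i, f i ∈ U d) : ∀ (n : ℕ) (T : Fin n → ι), nest bb f n T ∈ U (n * d)
  | 0, _ => zero_mem _
  | 1, T => by simpa [nest_one] using hf (T 0)
  | n + 2, T => by
    rw [nest_succ_succ]
    convert hgrade _ _ _ _ (hf (T 0)) (nest_mem hgrade hf (n + 1) (Fin.tail T)) using 2
    push_cast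
    ring

end Nest

lemma eq_sum_smul_of_mem_span {V κ : Type} [AddCommGroup V] [Module ℝ V] [Fintype κ]
    (form : V →ₗ[ℝ] V →ₗ[ℝ] ℝ) {e f : κ → V} {P : κ → κ → ℝ} {c : ℝ} (hc : c ≠ 0)
    (hpair : ∀ S T, form (e S) (f T) = c * P S T) (hfP : ∀ T, f T = ∑ S, P S T • f S)
    {x : V} (hx : x ∈ Submodule.span ℝ (Set.range f)) :
    x = ∑ T, (c⁻¹ * form (e T) x) • f T := by
  obtain ⟨w, rfl⟩ := (Submodule.mem_span_range_iff_exists_fun ℝ).mp hx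
  have hcoef : ∀ T, c⁻¹ * form (e T) (∑ S, w S • f S) = ∑ S, w S * P T S := by
    intro T
    simp only [map_sum, map_smul, hpair, smul_eq_mul, mul_sum]
    refine sum_congr rfl fun S _ => ?_
    field_simp
  calc ∑ S, w S • f S = ∑ S, w S • ∑ T, P T S • f T :=
        sum_congr rfl fun S _ => by rw [← hfP]
    _ = ∑ T, (∑ S, w S * P T S) • f T := by
        simp only [smul_sum, smul_smul, sum_smul]
        exact sum_comm
    _ = _ := by simp only [hcoef]

lemma sum_mul_cons_eq_of_idempotent {ι : Type} [Fintype ι] {n : ℕ}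
    {Q : (Fin n → ι) → (Fin n → ι) → ℝ} {R : (Fin (n + 1) → ι) → (Fin (n + 1) → ι) → ℝ}
    (hidem : ∀ S A, ∑ T, Q S T * Q T A = Q S A)
    (hR : ∀ M N, R M N = ∑ A, ∑ B,
      Q (Fin.tail M) A * R (Fin.cons (M 0) A) (Fin.cons (N 0) B) * Q B (Fin.tail N))
    (t : ι) (Pt : Fin (n + 1) → ι) (S : Fin n → ι) :
    ∑ T, Q S T * R (Fin.cons t T) Pt = R (Fin.cons t S) Pt := by
  set G : (Fin n → ι) → ℝ := fun A => ∑ B, R (Fin.cons t A) (Fin.cons (Pt 0) B) * Q B (Fin.tail Pt)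
  have hRG : ∀ T, R (Fin.cons t T) Pt = ∑ A, Q T A * G A := fun T => by
    simp only [hR (Fin.cons t T), G, Fin.cons_zero, Fin.tail_cons, mul_sum, mul_assoc]
  calc ∑ T, Q S T * R (Fin.cons t T) Pt = ∑ A, (∑ T, Q S T * Q T A) * G A := by
        simp only [hRG, mul_sum, sum_mul, mul_assoc]
        exact sum_comm
    _ = R (Fin.cons t S) Pt := by simp only [hidem, hRG]

lemma sum_smul_sum_prod_ite_smul {V ι α : Type} [AddCommGroup V] [Module ℝ V]
    [Fintype ι] [DecidableEq ι] [Fintype α] [DecidableEq α]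
    (w : (α → ι) → ℝ) (g : α → ι → V) (N : α → ι) :
    ∑ Q : α → ι, w Q • ∑ i, (∏ j ∈ univ.erase i, if N j = Q j then (1 : ℝ) else 0) • g i (Q i)
      = ∑ i, ∑ t, w (update N i t) • g i t := by
  have hδ : ∀ i (Q : α → ι),
      (∏ j ∈ univ.erase i, if N j = Q j then (1 : ℝ) else 0) • w Q • g i (Q i)
        = ∑ t, if update N i t = Q then w Q • g i (Q i) else 0 := by
    intro i Q
    simp [prod_boole, update_eq_iff, ite_and, sum_ite_eq']
  simp only [smul_sum, smul_comm (w _), hδ]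
  rw [sum_comm]
  refine sum_congr rfl fun i _ => ?_
  rw [sum_comm]
  simp

lemma Nat.forall_one_le_of_two_le {p : ℕ → Prop} {K : ℕ} (h1 : p 1)
    (h : ∀ m, 2 ≤ m → m ≤ K → p m) : ∀ m, 1 ≤ m → m ≤ K → p m := by
  intro m hm1 hmK
  obtain rfl | hm := hm1.eq_or_lt
  · exact h1
  · exact h m hm hmK

section Graded

variable {V : Type} [AddCommGroup V] [Module ℝ V] {U : ℤ → Submodule ℝ V}
  {bb : V →ₗ[ℝ] V →ₗ[ℝ] V} {form : V →ₗ[ℝ] V →ₗ[ℝ] ℝ} {ι : Type} {E F : ι → V}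

lemma bracket_nest_succ_succ
    (hgrade : ∀ (p q : ℤ) (x y : V), x ∈ U p → y ∈ U q → bb x y ∈ U (p + q))
    (hjac : ∀ (p q : ℤ) (x y z : V), x ∈ U p → y ∈ U q →
      bb (bb x y) z = bb x (bb y z) - ((-1 : ℝ) ^ (p * q)) • bb y (bb x z))
    (hE : ∀ M, E M ∈ U (-1)) (m : ℕ) (N : Fin (m + 2) → ι) (z : V) :
    bb (nest bb E (m + 2) N) z = bb (E (N 0)) (bb (nest bb E (m + 1) (Fin.tail N)) z)
      - (-1 : ℝ) ^ (m + 1) • bb (nest bb E (m + 1) (Fin.tail N)) (bb (E (N 0)) z) := by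
  rw [nest_succ_succ, hjac _ _ _ _ _ (hE _) (nest_mem bb E hgrade hE _ _), ← zpow_natCast]
  congr 4
  push_cast
  ring

lemma bracket_nest_E
    (hgrade : ∀ (p q : ℤ) (x y : V), x ∈ U p → y ∈ U q → bb x y ∈ U (p + q))
    (hanti : ∀ (p q : ℤ) (x y : V), x ∈ U p → y ∈ U q →
      bb x y = (-((-1 : ℝ) ^ (p * q))) • bb y x)
    (hE : ∀ M, E M ∈ U (-1)) (m : ℕ) (T : Fin (m + 1) → ι) (t : ι) :
    bb (nest bb E (m + 1) T) (E t) = -(-1 : ℝ) ^ (m + 1) • nest bb E (m + 2) (Fin.cons t T) := by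
  rw [nest_cons, hanti _ _ _ _ (nest_mem bb E hgrade hE _ _) (hE t), ← zpow_natCast]
  congr 4
  push_cast
  ring

lemma eq_sum_form_smul_of_mem_one [Fintype ι] [DecidableEq ι]
    (hEF : ∀ M N, form (E M) (F N) = if M = N then (1 : ℝ) else 0)
    (hspanF : U 1 ≤ Submodule.span ℝ (Set.range (nest bb F 1))) {x : V} (hx : x ∈ U 1) :
    x = ∑ t, form (E t) x • F t := by
  have hxF : x ∈ Submodule.span ℝ (Set.range F) := range_nest_one bb F ▸ hspanF hx
  simpa using eq_sum_smul_of_mem_span form one_ne_zero (e := E)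
    (P := fun S T => if S = T then 1 else 0) (by simpa using hEF) (by simp) hxF

lemma bracket_nest_E_nest_F [Fintype ι]
    (hgrade : ∀ (p q : ℤ) (x y : V), x ∈ U p → y ∈ U q → bb x y ∈ U (p + q))
    (hforminv : ∀ x y z : V, form (bb x y) z = form x (bb y z))
    (hE : ∀ M, E M ∈ U (-1)) (hF : ∀ M, F M ∈ U 1)
    (hres : ∀ x ∈ U 1, x = ∑ t, form (E t) x • F t)
    {m : ℕ} {c : ℝ} {Q : (Fin (m + 2) → ι) → (Fin (m + 2) → ι) → ℝ}
    (hpair : ∀ S T, form (nest bb E (m + 2) S) (nest bb F (m + 2) T) = c * Q S T)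
    (T : Fin (m + 1) → ι) (Pt : Fin (m + 2) → ι) :
    bb (nest bb E (m + 1) T) (nest bb F (m + 2) Pt) = c • ∑ t, Q (Fin.cons t T) Pt • F t := by
  have hmem : bb (nest bb E (m + 1) T) (nest bb F (m + 2) Pt) ∈ U 1 := by
    convert hgrade _ _ _ _ (nest_mem bb E hgrade hE _ T) (nest_mem bb F hgrade hF _ Pt) using 2
    push_cast
    ring
  rw [hres _ hmem, smul_sum]
  refine sum_congr rfl fun t _ => ?_
  rw [← hforminv, ← nest_cons, hpair, smul_smul]

lemma smul_bracket_E_nest_F [Fintype ι]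
    (hgrade : ∀ (p q : ℤ) (x y : V), x ∈ U p → y ∈ U q → bb x y ∈ U (p + q))
    (hanti : ∀ (p q : ℤ) (x y : V), x ∈ U p → y ∈ U q →
      bb x y = (-((-1 : ℝ) ^ (p * q))) • bb y x)
    (hforminv : ∀ x y z : V, form (bb x y) z = form x (bb y z))
    (hE : ∀ M, E M ∈ U (-1)) (hF : ∀ M, F M ∈ U 1)
    {m : ℕ} {c c' : ℝ} {Q : (Fin (m + 2) → ι) → (Fin (m + 2) → ι) → ℝ}
    (hres : ∀ x ∈ U (m + 1 : ℕ),
      x = ∑ T, (c⁻¹ * form (nest bb E (m + 1) T) x) • nest bb F (m + 1) T)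
    (hpair : ∀ S T, form (nest bb E (m + 2) S) (nest bb F (m + 2) T) = c' * Q S T)
    (t : ι) (Pt : Fin (m + 2) → ι) :
    (-1 : ℝ) ^ (m + 1) • bb (E t) (nest bb F (m + 2) Pt)
      = -(c' / c) • ∑ T, Q (Fin.cons t T) Pt • nest bb F (m + 1) T := by
  have hmem : bb (E t) (nest bb F (m + 2) Pt) ∈ U (m + 1 : ℕ) := by
    convert hgrade _ _ _ _ (hE t) (nest_mem bb F hgrade hF _ Pt) using 2
    push_cast
    ring
  have hsign : ((-1 : ℝ) ^ (m + 1)) ^ 2 = 1 := by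
    rw [← pow_mul, pow_mul']
    simp
  rw [hres _ hmem, smul_sum, smul_sum]
  refine sum_congr rfl fun T _ => ?_
  rw [← hforminv, bracket_nest_E hgrade hanti hE, map_smul, LinearMap.smul_apply, hpair,
    smul_smul, smul_smul, smul_eq_mul]
  congr 1
  linear_combination (-(c' * Q (Fin.cons t T) Pt / c)) * hsign

lemma bracket_bracket_nest_succ_succ [Fintype ι]
    (hgrade : ∀ (p q : ℤ) (x y : V), x ∈ U p → y ∈ U q → bb x y ∈ U (p + q))
    (hanti : ∀ (p q : ℤ) (x y : V), x ∈ U p → y ∈ U q →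
      bb x y = (-((-1 : ℝ) ^ (p * q))) • bb y x)
    (hjac : ∀ (p q : ℤ) (x y z : V), x ∈ U p → y ∈ U q →
      bb (bb x y) z = bb x (bb y z) - ((-1 : ℝ) ^ (p * q)) • bb y (bb x z))
    (hforminv : ∀ x y z : V, form (bb x y) z = form x (bb y z))
    (hE : ∀ M, E M ∈ U (-1)) (hF : ∀ M, F M ∈ U 1)
    (hres1 : ∀ x ∈ U 1, x = ∑ t, form (E t) x • F t)
    {m : ℕ} {P : (n : ℕ) → (Fin n → ι) → (Fin n → ι) → ℝ} {a : ℕ → ℝ}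
    (hres : ∀ x ∈ U (m + 1 : ℕ),
      x = ∑ T, ((a (m + 1))⁻¹ * form (nest bb E (m + 1) T) x) • nest bb F (m + 1) T)
    (hpair : ∀ S T, form (nest bb E (m + 2) S) (nest bb F (m + 2) T) = a (m + 2) * P (m + 2) S T)
    (hcontr : ∀ (t : ι) (Pt : Fin (m + 2) → ι) (S : Fin (m + 1) → ι),
      ∑ T, P (m + 1) S T * P (m + 2) (Fin.cons t T) Pt = P (m + 2) (Fin.cons t S) Pt)
    (ha : a (m + 2) ≠ 0) (M : ι)
    (ih : ∀ N Pt : Fin (m + 1) → ι,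
      (a (m + 1))⁻¹ • bb (E M) (bb (nest bb E (m + 1) N) (nest bb F (m + 1) Pt))
        = ∑ i, ∑ t, P (m + 1) (update N i t) Pt • bb (E M) (bb (E (N i)) (F t)))
    (N Pt : Fin (m + 2) → ι) :
    (a (m + 2))⁻¹ • bb (E M) (bb (nest bb E (m + 2) N) (nest bb F (m + 2) Pt))
      = ∑ i, ∑ t, P (m + 2) (update N i t) Pt • bb (E M) (bb (E (N i)) (F t)) := by
  have hfirst : (a (m + 2))⁻¹ •
        bb (E M) (bb (E (N 0)) (bb (nest bb E (m + 1) (Fin.tail N)) (nest bb F (m + 2) Pt)))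
      = ∑ t, P (m + 2) (update N 0 t) Pt • bb (E M) (bb (E (N 0)) (F t)) := by
    rw [bracket_nest_E_nest_F hgrade hforminv hE hF hres1 hpair, map_smul, map_smul, smul_smul,
      inv_mul_cancel₀ ha, one_smul, map_sum, map_sum]
    simp only [map_smul, Fin.update_zero_eq_cons]
  have hsecond : (a (m + 2))⁻¹ • (-1 : ℝ) ^ (m + 1) •
        bb (E M) (bb (nest bb E (m + 1) (Fin.tail N)) (bb (E (N 0)) (nest bb F (m + 2) Pt)))
      = -∑ i : Fin (m + 1), ∑ t, P (m + 2) (update N i.succ t) Pt •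
          bb (E M) (bb (E (N i.succ)) (F t)) := by
    have hcoef : (a (m + 2))⁻¹ * -(a (m + 2) / a (m + 1)) = -(a (m + 1))⁻¹ := by
      field_simp
    rw [← map_smul (bb (E M)), ← map_smul (bb (nest bb E (m + 1) (Fin.tail N))),
      smul_bracket_E_nest_F hgrade hanti hforminv hE hF hres hpair,
      map_smul, map_smul, smul_smul, hcoef, neg_smul, map_sum, map_sum, smul_sum]
    congr 1
    calc ∑ T, (a (m + 1))⁻¹ • bb (E M) (bb (nest bb E (m + 1) (Fin.tail N))
          (P (m + 2) (Fin.cons (N 0) T) Pt • nest bb F (m + 1) T))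
        = ∑ T, P (m + 2) (Fin.cons (N 0) T) Pt • ((a (m + 1))⁻¹ •
            bb (E M) (bb (nest bb E (m + 1) (Fin.tail N)) (nest bb F (m + 1) T))) := by
          simp only [map_smul, smul_comm (a (m + 1))⁻¹]
      _ = ∑ i, ∑ t, (∑ T, P (m + 2) (Fin.cons (N 0) T) Pt * P (m + 1) (update (Fin.tail N) i t) T)
            • bb (E M) (bb (E (Fin.tail N i)) (F t)) := by
          simp only [ih, smul_sum, smul_smul, sum_smul]
          rw [sum_comm]
          exact sum_congr rfl fun i _ => sum_comm
      _ = _ := by simp only [mul_comm (P (m + 2) _ _), hcontr, Fin.update_succ_eq_cons]; rfl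
  rw [bracket_nest_succ_succ hgrade hjac hE, map_sub, map_smul, smul_sub, hfirst, hsecond,
    sub_neg_eq_add]
  exact (Fin.sum_univ_succ (fun i => ∑ t, P (m + 2) (update N i t) Pt •
    bb (E M) (bb (E (N i)) (F t)))).symm

lemma bracket_bracket_nest_eq_sum_update [Fintype ι] [DecidableEq ι]
    (hgrade : ∀ (p q : ℤ) (x y : V), x ∈ U p → y ∈ U q → bb x y ∈ U (p + q))
    (hanti : ∀ (p q : ℤ) (x y : V), x ∈ U p → y ∈ U q →
      bb x y = (-((-1 : ℝ) ^ (p * q))) • bb y x)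
    (hjac : ∀ (p q : ℤ) (x y z : V), x ∈ U p → y ∈ U q →
      bb (bb x y) z = bb x (bb y z) - ((-1 : ℝ) ^ (p * q)) • bb y (bb x z))
    (hforminv : ∀ x y z : V, form (bb x y) z = form x (bb y z))
    (hE : ∀ M, E M ∈ U (-1)) (hF : ∀ M, F M ∈ U 1)
    (hEF : ∀ M N, form (E M) (F N) = if M = N then (1 : ℝ) else 0)
    (hspanF : ∀ m : ℕ, 1 ≤ m → U (m : ℤ) ≤ Submodule.span ℝ (Set.range (nest bb F m)))
    {K : ℕ} {P : (m : ℕ) → (Fin m → ι) → (Fin m → ι) → ℝ}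
    (hP1 : ∀ M N : Fin 1 → ι, P 1 M N = if M 0 = N 0 then (1 : ℝ) else 0)
    (hPidem : ∀ m, 1 ≤ m → m ≤ K → ∀ M N : Fin m → ι,
      ∑ Q : Fin m → ι, P m M Q * P m Q N = P m M N)
    (hPF : ∀ m, 1 ≤ m → m ≤ K → ∀ N : Fin m → ι,
      nest bb F m N = ∑ M : Fin m → ι, P m M N • nest bb F m M)
    (hPnest : ∀ m : ℕ, 2 ≤ m + 1 → m + 1 ≤ K → ∀ M N : Fin (m + 1) → ι,
      P (m + 1) M N = ∑ A : Fin m → ι, ∑ B : Fin m → ι,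
        P m (Fin.tail M) A * P (m + 1) (Fin.cons (M 0) A) (Fin.cons (N 0) B) *
          P m B (Fin.tail N))
    {a : ℕ → ℝ} (ha1 : a 1 = 1) (hane : ∀ m, 1 ≤ m → m ≤ K → a m ≠ 0)
    (haP : ∀ m, 1 ≤ m → m ≤ K → ∀ M N : Fin m → ι,
      form (nest bb E m M) (nest bb F m N) = a m * P m M N)
    (M : ι) : ∀ n, 1 ≤ n → n ≤ K → ∀ N Pt : Fin n → ι,
      (a n)⁻¹ • bb (E M) (bb (nest bb E n N) (nest bb F n Pt))
        = ∑ i, ∑ t, P n (update N i t) Pt • bb (E M) (bb (E (N i)) (F t)) := by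
  intro n hn
  induction n, hn using Nat.le_induction with
  | base =>
    intro _ N Pt
    simp [nest_one, ha1, hP1, ite_smul, sum_ite_eq']
  | succ n hn ih =>
    intro hle
    obtain ⟨m, rfl⟩ : ∃ m, n = m + 1 := ⟨n - 1, by omega⟩
    exact bracket_bracket_nest_succ_succ hgrade hanti hjac hforminv hE hF
      (fun _ => eq_sum_form_smul_of_mem_one hEF (hspanF 1 le_rfl))
      (fun x hx => eq_sum_smul_of_mem_span form (hane _ hn (by omega)) (haP _ hn (by omega))
        (hPF _ hn (by omega)) (hspanF _ hn hx))
      (haP _ (by omega) hle)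
      (sum_mul_cons_eq_of_idempotent (hPidem _ hn (by omega)) (hPnest _ (by omega) hle))
      (hane _ (by omega) hle) M (ih (by omega))

end Graded

theorem X_recursion_general
    {V : Type} [AddCommGroup V] [Module ℝ V]
    (U : ℤ → Submodule ℝ V)
    (bb : V →ₗ[ℝ] V →ₗ[ℝ] V)
    (form : V →ₗ[ℝ] V →ₗ[ℝ] ℝ)
    (hgrade : ∀ (p q : ℤ) (x y : V), x ∈ U p → y ∈ U q → bb x y ∈ U (p + q))
    (hanti : ∀ (p q : ℤ) (x y : V), x ∈ U p → y ∈ U q →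
      bb x y = (-((-1 : ℝ) ^ (p * q))) • bb y x)
    (hjac : ∀ (p q : ℤ) (x y z : V), x ∈ U p → y ∈ U q →
      bb (bb x y) z = bb x (bb y z) - ((-1 : ℝ) ^ (p * q)) • bb y (bb x z))
    (hforminv : ∀ x y z : V, form (bb x y) z = form x (bb y z))
    {ι : Type} [Fintype ι] [DecidableEq ι]
    (E F : ι → V)
    (hE : ∀ M, E M ∈ U (-1))
    (hF : ∀ M, F M ∈ U 1)
    (hEF : ∀ M N, form (E M) (F N) = if M = N then (1 : ℝ) else 0)
    (hspanF : ∀ m : ℕ, 1 ≤ m → U (m : ℤ) ≤ Submodule.span ℝ (Set.range (nest bb F m)))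
    (k : ℕ)
    (P : (m : ℕ) → (Fin m → ι) → (Fin m → ι) → ℝ)
    (hP1 : ∀ M N : Fin 1 → ι, P 1 M N = if M 0 = N 0 then (1 : ℝ) else 0)
    (hPidem : ∀ m, 2 ≤ m → m ≤ k + 2 → ∀ M N : Fin m → ι,
      ∑ Q : Fin m → ι, P m M Q * P m Q N = P m M N)
    (hPF : ∀ m, 2 ≤ m → m ≤ k + 2 → ∀ N : Fin m → ι,
      nest bb F m N = ∑ M : Fin m → ι, P m M N • nest bb F m M)
    (hPnest : ∀ m : ℕ, 2 ≤ m + 1 → m + 1 ≤ k + 2 → ∀ M N : Fin (m + 1) → ι,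
      P (m + 1) M N = ∑ A : Fin m → ι, ∑ B : Fin m → ι,
        P m (Fin.tail M) A * P (m + 1) (Fin.cons (M 0) A) (Fin.cons (N 0) B) *
          P m B (Fin.tail N))
    (a : ℕ → ℝ)
    (ha1 : a 1 = 1)
    (hane : ∀ m, 1 ≤ m → m ≤ k + 2 → a m ≠ 0)
    (haP : ∀ m, 2 ≤ m → m ≤ k + 2 → ∀ M N : Fin m → ι,
      form (nest bb E m M) (nest bb F m N) = a m * P m M N) :
    ∀ (M : ι) (N Pt : Fin (k + 2) → ι),
      (a (k + 2))⁻¹ • bb (E M) (bb (nest bb E (k + 2) N) (nest bb F (k + 2) Pt))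
        = ∑ Q : Fin (k + 2) → ι, P (k + 2) Q Pt •
            ∑ i : Fin (k + 2),
              (∏ j ∈ Finset.univ.erase i, (if N j = Q j then (1 : ℝ) else 0)) •
                ((a 1)⁻¹ • bb (E M) (bb (E (N i)) (F (Q i)))) := by
  intro M N Pt
  have hP1' : ∀ S T : Fin 1 → ι, P 1 S T = if S = T then 1 else 0 := fun S T => by
    simp [hP1, funext_iff, Fin.forall_fin_one]
  rw [bracket_bracket_nest_eq_sum_update hgrade hanti hjac hforminv hE hF hEF hspanF hP1
    (Nat.forall_one_le_of_two_le (by simp [hP1']) hPidem)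
    (Nat.forall_one_le_of_two_le (by simp [hP1', ite_smul]) hPF) hPnest ha1 hane
    (Nat.forall_one_le_of_two_le (by simp [nest_one, hEF, hP1, ha1]) haP) M _ (by omega) le_rfl,
    ha1, inv_one]
  simp only [one_smul]
  exact (sum_smul_sum_prod_ite_smul (P (k + 2) · Pt)
    (fun i t => bb (E M) (bb (E (N i)) (F t))) N).symm

/-- With `𝚇_{M|N1⋯Nk}^{P1⋯Pk} = (1/a_k) ⟦E_M, ⟦E_{N1⋯Nk}, F^{P1⋯Pk}⟧⟧`
(and `p = k + 2 ≥ 2`):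
`𝚇_{M|N1⋯Np}^{P1⋯Pp} = Σ_Q (ℙ_p)_{Q1⋯Qp}{}^{P1⋯Pp} Σ_i δ_{N1}^{Q1} ⋯ 𝚇_{M|Ni}^{Qi} ⋯ δ_{Np}^{Qp}`. -/
theorem X_recursion
    {V : Type} [AddCommGroup V] [Module ℝ V]
    (U : ℤ → Submodule ℝ V)
    (bb : V →ₗ[ℝ] V →ₗ[ℝ] V)
    (form : V →ₗ[ℝ] V →ₗ[ℝ] ℝ)
    (hgrade : ∀ (p q : ℤ) (x y : V), x ∈ U p → y ∈ U q → bb x y ∈ U (p + q))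
    (hanti : ∀ (p q : ℤ) (x y : V), x ∈ U p → y ∈ U q →
      bb x y = (-((-1 : ℝ) ^ (p * q))) • bb y x)
    (hjac : ∀ (p q : ℤ) (x y z : V), x ∈ U p → y ∈ U q →
      bb (bb x y) z = bb x (bb y z) - ((-1 : ℝ) ^ (p * q)) • bb y (bb x z))
    (hform0 : ∀ (p q : ℤ) (x y : V), x ∈ U p → y ∈ U q → p + q ≠ 0 → form x y = 0)
    (hforminv : ∀ x y z : V, form (bb x y) z = form x (bb y z))
    {ι : Type} [Fintype ι] [DecidableEq ι]
    (E F : ι → V)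
    (hE : ∀ M, E M ∈ U (-1))
    (hF : ∀ M, F M ∈ U 1)
    (hEF : ∀ M N, form (E M) (F N) = if M = N then (1 : ℝ) else 0)
    (hspanE : ∀ m : ℕ, 1 ≤ m → U (-(m : ℤ)) ≤ Submodule.span ℝ (Set.range (nest bb E m)))
    (hspanF : ∀ m : ℕ, 1 ≤ m → U (m : ℤ) ≤ Submodule.span ℝ (Set.range (nest bb F m)))
    (k : ℕ)
    (P : (m : ℕ) → (Fin m → ι) → (Fin m → ι) → ℝ)
    (hP1 : ∀ M N : Fin 1 → ι, P 1 M N = if M 0 = N 0 then (1 : ℝ) else 0)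
    (hPidem : ∀ m, 2 ≤ m → m ≤ k + 2 → ∀ M N : Fin m → ι,
      ∑ Q : Fin m → ι, P m M Q * P m Q N = P m M N)
    (hPE : ∀ m, 2 ≤ m → m ≤ k + 2 → ∀ M : Fin m → ι,
      nest bb E m M = ∑ N : Fin m → ι, P m M N • nest bb E m N)
    (hPF : ∀ m, 2 ≤ m → m ≤ k + 2 → ∀ N : Fin m → ι,
      nest bb F m N = ∑ M : Fin m → ι, P m M N • nest bb F m M)
    (hPnest : ∀ m : ℕ, 2 ≤ m + 1 → m + 1 ≤ k + 2 → ∀ M N : Fin (m + 1) → ι,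
      P (m + 1) M N = ∑ A : Fin m → ι, ∑ B : Fin m → ι,
        P m (Fin.tail M) A * P (m + 1) (Fin.cons (M 0) A) (Fin.cons (N 0) B) *
          P m B (Fin.tail N))
    (a : ℕ → ℝ)
    (ha1 : a 1 = 1)
    (hane : ∀ m, 1 ≤ m → m ≤ k + 2 → a m ≠ 0)
    (haP : ∀ m, 2 ≤ m → m ≤ k + 2 → ∀ M N : Fin m → ι,
      form (nest bb E m M) (nest bb F m N) = a m * P m M N) :
    ∀ (M : ι) (N Pt : Fin (k + 2) → ι),
      (a (k + 2))⁻¹ • bb (E M) (bb (nest bb E (k + 2) N) (nest bb F (k + 2) Pt))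
        = ∑ Q : Fin (k + 2) → ι, P (k + 2) Q Pt •
            ∑ i : Fin (k + 2),
              (∏ j ∈ Finset.univ.erase i, (if N j = Q j then (1 : ℝ) else 0)) •
                ((a 1)⁻¹ • bb (E M) (bb (E (N i)) (F (Q i)))) :=
  X_recursion_general U bb form hgrade hanti hjac hforminv E F hE hF hEF hspanF k P hP1 hPidem hPF
    hPnest a ha1 hane haP
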